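/- Let 0 < λ < 1 and let δ be an admissible FCFS pair configuration. Then the series ∑_{x1,y1,x2,y2 ≥ 1} G(x1,y1,x2,y2) converges absolutely and equals λ − 2·δ^{pos}(1), where δ^{pos}(1) := ∑_{x2≥1} δ(1,x2). Consequently, if G(x1,y1,x2,y2) = 0 for all indices, then q(0) = 1 − λ. -/

import Mathlib

open scoped BigOperators

/-- `δ(x1,y1,x2) = ∑_{y2} δ(x1,y1,x2,y2)`. -/
noncomputable def mar3 (del : ℕ → ℕ → ℕ → ℕ → ℝ) (x1 y1 x2 : ℕ) : ℝ :=
  ∑' y2 : ℕ, del x1 y1 x2 y2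

/-- `δ(x1,x2) = ∑_{y1,y2} δ(x1,y1,x2,y2)`. -/
noncomputable def mar2 (del : ℕ → ℕ → ℕ → ℕ → ℝ) (x1 x2 : ℕ) : ℝ :=
  ∑' yy : ℕ × ℕ, del x1 yy.1 x2 yy.2

/-- `q(x) = 2δ(1,x)` for `x ≥ 1`, and `q(0) = 1 − ∑_{x≥1} q(x)`. -/
noncomputable def qPos (del : ℕ → ℕ → ℕ → ℕ → ℝ) (x : ℕ) : ℝ :=
  if x = 0 then 1 - ∑' z : ℕ, 2 * mar2 del 1 (z + 1) else 2 * mar2 del 1 x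

/-- `κ(x_a,x_b) = ∑_{x'=1}^{x_a} δ(x',1,x_b)/δ(x',x_b)`. -/
noncomputable def kap (del : ℕ → ℕ → ℕ → ℕ → ℝ) (xa xb : ℕ) : ℝ :=
  ∑ x' ∈ Finset.Icc 1 xa, mar3 del x' 1 xb / mar2 del x' xb

/-- An admissible position/queue-length pair configuration: nonnegative,
vanishing outside `1 ≤ x1 ≤ x2`, `1 ≤ y1 ≤ y2`, symmetric in the two replicas,
with finite first moment of the queue length and positive marginals. -/
def AdmissibleQuad (del : ℕ → ℕ → ℕ → ℕ → ℝ) : Prop :=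
  (∀ x1 y1 x2 y2, 0 ≤ del x1 y1 x2 y2) ∧
  (∀ x1 y1 x2 y2, x1 = 0 ∨ y1 = 0 ∨ x2 = 0 ∨ y2 = 0 ∨ x2 < x1 ∨ y2 < y1 →
      del x1 y1 x2 y2 = 0) ∧
  (∀ x1 y1 x2 y2, del x1 y1 x2 y2 = del y1 x1 y2 x2) ∧
  Summable (fun v : ℕ × ℕ × ℕ × ℕ =>
      (v.2.2.1 : ℝ) * del v.1 v.2.1 v.2.2.1 v.2.2.2) ∧
  (∀ x1 x2 : ℕ, 1 ≤ x1 → x1 ≤ x2 → 0 < mar2 del x1 x2)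

/-- The FCFS pair drift `G(x1,y1,x2,y2)`. -/
noncomputable def GFCFS (lam : ℝ) (del : ℕ → ℕ → ℕ → ℕ → ℝ)
    (x1 y1 x2 y2 : ℕ) : ℝ :=
  lam * qPos del (x2 - 1) * qPos del (y2 - 1) *
      (if x1 = x2 ∧ y1 = y2 then 1 else 0)
    - 4 * lam * del x1 y1 x2 y2
    + 2 * lam * del x1 y1 (x2 - 1) y2 + 2 * lam * del x1 y1 x2 (y2 - 1)
    - del x1 y1 x2 y2 *
        (2 + kap del x2 x2 - mar3 del x1 1 x2 / mar2 del x1 x2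
          + kap del y2 y2 - mar3 del y1 1 y2 / mar2 del y1 y2)
    + del (x1 + 1) y1 (x2 + 1) y2 * (1 + kap del x1 (x2 + 1))
    + del x1 y1 (x2 + 1) y2 * (kap del (x2 + 1) (x2 + 1) - kap del x1 (x2 + 1))
    + del x1 (y1 + 1) x2 (y2 + 1) * (1 + kap del y1 (y2 + 1))
    + del x1 y1 x2 (y2 + 1) * (kap del (y2 + 1) (y2 + 1) - kap del y1 (y2 + 1))

/-!
Write `G(x + 1)` as a diagonal term `λ q(x2) q(y2) 1[x1 = x2, y1 = y2]`, the arrival terms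
`2λ δ(· - e_{x2}) + 2λ δ(· - e_{y2}) - 4λ δ`, and one service term per replica. Since `∑ q = 1`
the diagonal term sums to `λ`, and since `δ` vanishes at index `0` the arrival terms sum to `0`.
Reindex each part of a service term at the state `(x1,y1,x2,y2)` whose mass it moves: the
coefficients of `δ(x1,y1,x2,y2)` then telescope, via `κ(x1,x2) = κ(x1-1,x2) + δ(x1,1,x2)/δ(x1,x2)`,
to `-1[x1 = 1]`, so each replica contributes `-δ^{pos}(1)` (the second one by symmetry of `δ`).
All series converge absolutely because `0 ≤ κ(a,b) ≤ a` and `δ` has a finite first moment.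
-/

open Function

local notation "ℕ⁴" => ℕ × ℕ × ℕ × ℕ

theorem hasSum_comp_add_right_iff {M α : Type*} [AddCommMonoid M] [IsRightCancelAdd M] [LE M]
    [ExistsAddOfLE M] [AddCommMonoid α] [TopologicalSpace α] {f : M → α} {s : M}
    (hf : ∀ w, f w ≠ 0 → s ≤ w) {a : α} :
    HasSum (fun v => f (v + s)) a ↔ HasSum f a :=
  (add_left_injective s).hasSum_iff fun w hw => by
    by_contra hne
    obtain ⟨c, rfl⟩ := exists_add_of_le (hf w hne)
    exact hw ⟨c, add_comm c s⟩

def uncurry4 (del : ℕ → ℕ → ℕ → ℕ → ℝ) (w : ℕ⁴) : ℝ :=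
  del w.1 w.2.1 w.2.2.1 w.2.2.2

def swapPair (v : ℕ⁴) : ℕ⁴ :=
  (v.2.1, v.1, v.2.2.2, v.2.2.1)

theorem swapPair_involutive : Involutive swapPair := fun _ => rfl

section Rates

variable (del : ℕ → ℕ → ℕ → ℕ → ℝ)

/- In one replica, `δ(x1,·,x2,·)` enters `G` with coefficient `-exitRate x1 x2` at its own
index, with `frontRate x1 x2` at `(x1-1,·,x2-1,·)` and with `backRate x1 x2` at
`(x1,·,x2-1,·)`. -/
noncomputable def exitRate (x1 x2 : ℕ) : ℝ :=
  1 + kap del x2 x2 - mar3 del x1 1 x2 / mar2 del x1 x2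

noncomputable def frontRate (x1 x2 : ℕ) : ℝ :=
  if x1 = 1 then 0 else 1 + kap del (x1 - 1) x2

noncomputable def backRate (x1 x2 : ℕ) : ℝ :=
  kap del x2 x2 - kap del x1 x2

noncomputable def flow (rate : ℕ → ℕ → ℝ) (w : ℕ⁴) : ℝ :=
  uncurry4 del w * rate w.1 w.2.2.1

noncomputable def diagTerm (lam : ℝ) (v : ℕ⁴) : ℝ :=
  lam * qPos del v.2.2.1 * qPos del v.2.2.2 * if v.1 = v.2.2.1 ∧ v.2.1 = v.2.2.2 then 1 else 0

noncomputable def arrivalTerm (lam : ℝ) (v : ℕ⁴) : ℝ :=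
  2 * lam * uncurry4 del (v + (1, 1, 0, 1)) + 2 * lam * uncurry4 del (v + (1, 1, 1, 0))
    - 4 * lam * uncurry4 del (v + (1, 1, 1, 1))

noncomputable def serviceTerm (v : ℕ⁴) : ℝ :=
  flow del (frontRate del) (v + (2, 1, 2, 1)) + flow del (backRate del) (v + (1, 1, 2, 1))
    - flow del (exitRate del) (v + (1, 1, 1, 1))

variable {del}

theorem kap_zero (xb : ℕ) : kap del 0 xb = 0 := by
  simp [kap]

theorem kap_succ (xa xb : ℕ) :
    kap del (xa + 1) xb = kap del xa xb + mar3 del (xa + 1) 1 xb / mar2 del (xa + 1) xb :=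
  Finset.sum_Icc_succ_top (by omega) _

theorem frontRate_add_two (x1 x2 : ℕ) : frontRate del (x1 + 2) x2 = 1 + kap del (x1 + 1) x2 := by
  simp [frontRate]

theorem frontRate_add_backRate_sub_exitRate {x1 : ℕ} (hx1 : 1 ≤ x1) (x2 : ℕ) :
    frontRate del x1 x2 + backRate del x1 x2 - exitRate del x1 x2 = -if x1 = 1 then 1 else 0 := by
  obtain ⟨k, rfl⟩ := Nat.exists_eq_add_of_le' hx1
  rcases k with _ | k
  · simp only [frontRate, backRate, exitRate, kap_succ 0, kap_zero, if_pos]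
    ring
  · simp only [frontRate_add_two, backRate, exitRate, kap_succ (k + 1), Nat.reduceEqDiff, if_false]
    ring

theorem qPos_zero : qPos del 0 = 1 - ∑' c, 2 * mar2 del 1 (c + 1) := rfl

theorem qPos_succ (n : ℕ) : qPos del (n + 1) = 2 * mar2 del 1 (n + 1) := rfl

theorem GFCFS_succ_eq (hsym : ∀ x1 y1 x2 y2, del x1 y1 x2 y2 = del y1 x1 y2 x2) (lam : ℝ)
    (v : ℕ⁴) :
    GFCFS lam del (v.1 + 1) (v.2.1 + 1) (v.2.2.1 + 1) (v.2.2.2 + 1) =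
      diagTerm del lam v + arrivalTerm del lam v + serviceTerm del v +
        serviceTerm del (swapPair v) := by
  obtain ⟨a, b, c, d⟩ := v
  simp only [GFCFS, diagTerm, arrivalTerm, serviceTerm, flow, uncurry4, swapPair,
    frontRate_add_two, backRate, exitRate, Prod.mk_add_mk, Nat.add_sub_cancel,
    Nat.add_right_cancel_iff, add_zero]
  rw [hsym (b + 2), hsym (b + 1) (a + 1) (d + 2), hsym (b + 1) (a + 1) (d + 1)]
  ring_nf

end Rates

namespace AdmissibleQuad

variable {del : ℕ → ℕ → ℕ → ℕ → ℝ} (h : AdmissibleQuad del)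
include h

theorem nonneg (w : ℕ⁴) : 0 ≤ uncurry4 del w :=
  h.1 _ _ _ _

theorem le_of_ne_zero {w : ℕ⁴} (hw : uncurry4 del w ≠ 0) : (1, 1, 1, 1) ≤ w ∧ w.1 ≤ w.2.2.1 := by
  obtain ⟨a, b, c, d⟩ := w
  have := mt (h.2.1 a b c d) hw
  simp only [Prod.mk_le_mk]
  omega

theorem summable : Summable (uncurry4 del) := by
  refine Summable.of_nonneg_of_le h.nonneg (fun w => ?_) h.2.2.2.1
  by_cases hw : uncurry4 del w = 0
  · rw [hw]
    exact mul_nonneg (Nat.cast_nonneg _) (h.nonneg w)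
  · have hc : (1 : ℝ) ≤ w.2.2.1 := by
      exact_mod_cast (h.le_of_ne_zero hw).1.2.2.1
    exact le_mul_of_one_le_left (h.nonneg w) hc

theorem summable_flow {rate : ℕ → ℕ → ℝ} (K : ℝ)
    (hrate : ∀ x1 x2, x1 ≤ x2 → |rate x1 x2| ≤ x2 + K) : Summable (flow del rate) := by
  have hmom : Summable fun w : ℕ⁴ => ((w.2.2.1 : ℝ) + K) * uncurry4 del w :=
    (h.2.2.2.1.add (h.summable.mul_left K)).congr fun w => by simp only [uncurry4]; ring
  refine hmom.of_norm_bounded fun w => ?_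
  by_cases hw : uncurry4 del w = 0
  · simp [flow, hw]
  · rw [flow, norm_mul, Real.norm_of_nonneg (h.nonneg w), Real.norm_eq_abs, mul_comm]
    exact mul_le_mul_of_nonneg_right (hrate _ _ (h.le_of_ne_zero hw).2) (h.nonneg w)

theorem summable_slice (x1 x2 : ℕ) : Summable fun yy : ℕ × ℕ => del x1 yy.1 x2 yy.2 :=
  h.summable.comp_injective (i := fun yy : ℕ × ℕ => (x1, yy.1, x2, yy.2)) fun p q hpq => by
    simp_all [Prod.ext_iff]

theorem mar3_le_mar2 (x1 y1 x2 : ℕ) : mar3 del x1 y1 x2 ≤ mar2 del x1 x2 :=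
  tsum_comp_le_tsum_of_inj (h.summable_slice x1 x2) (fun _ => h.1 _ _ _ _)
    (Prod.mk_right_injective y1)

theorem mar3_div_mar2_nonneg (x1 x2 : ℕ) : 0 ≤ mar3 del x1 1 x2 / mar2 del x1 x2 :=
  div_nonneg (tsum_nonneg fun _ => h.1 _ _ _ _) (tsum_nonneg fun _ => h.1 _ _ _ _)

theorem mar3_div_mar2_le_one (x1 x2 : ℕ) : mar3 del x1 1 x2 / mar2 del x1 x2 ≤ 1 :=
  div_le_one_of_le₀ (h.mar3_le_mar2 _ _ _) (tsum_nonneg fun _ => h.1 _ _ _ _)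

theorem kap_nonneg (xa xb : ℕ) : 0 ≤ kap del xa xb :=
  Finset.sum_nonneg fun _ _ => h.mar3_div_mar2_nonneg _ _

theorem kap_le (xa xb : ℕ) : kap del xa xb ≤ xa :=
  (Finset.sum_le_card_nsmul _ _ 1 fun x _ => h.mar3_div_mar2_le_one x xb).trans_eq (by simp)

theorem kap_mono (xb : ℕ) : Monotone fun xa => kap del xa xb := fun _ _ hxa =>
  Finset.sum_le_sum_of_subset_of_nonneg (Finset.Icc_subset_Icc_right hxa)
    fun _ _ _ => h.mar3_div_mar2_nonneg _ _

theorem abs_exitRate_le (x1 x2 : ℕ) : |exitRate del x1 x2| ≤ x2 + 1 := by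
  have := h.kap_le x2 x2
  have := h.kap_nonneg x2 x2
  have := h.mar3_div_mar2_nonneg x1 x2
  have := h.mar3_div_mar2_le_one x1 x2
  rw [exitRate, abs_le]
  constructor <;> linarith

theorem abs_frontRate_le {x1 x2 : ℕ} (hx : x1 ≤ x2) : |frontRate del x1 x2| ≤ x2 + 1 := by
  unfold frontRate
  split_ifs
  · rw [abs_zero]
    positivity
  · have := h.kap_le (x1 - 1) x2
    have := h.kap_nonneg (x1 - 1) x2
    have : ((x1 - 1 : ℕ) : ℝ) ≤ x2 := by exact_mod_cast (Nat.sub_le x1 1).trans hx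
    rw [abs_le]
    constructor <;> linarith

theorem abs_backRate_le {x1 x2 : ℕ} (hx : x1 ≤ x2) : |backRate del x1 x2| ≤ x2 + 1 := by
  have := h.kap_le x2 x2
  have := h.kap_nonneg x1 x2
  have := h.kap_mono x2 hx
  rw [backRate, abs_le]
  constructor <;> linarith

theorem mar2_zero_right (x1 : ℕ) : mar2 del x1 0 = 0 := by
  simp [mar2, h.2.1 x1 _ 0 _ (by simp)]

theorem summable_mar2_one : Summable (mar2 del 1) :=
  (h.summable.comp_injective (i := fun p : ℕ × ℕ × ℕ => (1, p.2.1, p.1, p.2.2)) fun p q hpq => by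
    simp_all [Prod.ext_iff]).prod

theorem tsum_mar2_one_succ : ∑' c, mar2 del 1 (c + 1) = ∑' c, mar2 del 1 c := by
  rw [h.summable_mar2_one.tsum_eq_zero_add, h.mar2_zero_right, zero_add]

theorem hasSum_qPos : HasSum (qPos del) 1 := by
  have hs : Summable fun n => 2 * mar2 del 1 (n + 1) :=
    ((summable_nat_add_iff 1).mpr h.summable_mar2_one).mul_left 2
  rw [← hasSum_nat_add_iff' 1]
  simpa [qPos_succ, qPos_zero] using hs.hasSum

theorem hasSum_diagTerm (lam : ℝ) : HasSum (diagTerm del lam) lam := by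
  have hq := h.hasSum_qPos
  have habs : Summable fun n => ‖qPos del n‖ := hq.summable.abs
  have hprod := (hq.mul hq (summable_mul_of_summable_norm habs habs)).mul_left lam
  rw [mul_one, mul_one] at hprod
  have hdiag : Injective fun p : ℕ × ℕ => ((p.1, p.2, p.1, p.2) : ℕ⁴) := fun p q hpq => by
    simp_all [Prod.ext_iff]
  refine (hdiag.hasSum_iff fun w hw => ?_).mp (hprod.congr_fun fun p => ?_)
  · obtain ⟨a, b, c, d⟩ := w
    rw [diagTerm, if_neg, mul_zero]
    rintro ⟨hac, hbd⟩
    exact hw ⟨(a, b), by simp_all⟩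
  · simp [diagTerm, mul_assoc]

theorem hasSum_uncurry4_comp_add {s : ℕ⁴} (hs : s ≤ (1, 1, 1, 1)) :
    HasSum (fun v => uncurry4 del (v + s)) (∑' w, uncurry4 del w) :=
  (hasSum_comp_add_right_iff fun _ hw => hs.trans (h.le_of_ne_zero hw).1).mpr h.summable.hasSum

theorem hasSum_arrivalTerm (lam : ℝ) : HasSum (arrivalTerm del lam) 0 := by
  have h1 := (h.hasSum_uncurry4_comp_add (s := (1, 1, 0, 1)) (by simp [Prod.mk_le_mk])).mul_left
    (2 * lam)
  have h2 := (h.hasSum_uncurry4_comp_add (s := (1, 1, 1, 0)) (by simp [Prod.mk_le_mk])).mul_left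
    (2 * lam)
  have h3 := (h.hasSum_uncurry4_comp_add le_rfl).mul_left (4 * lam)
  have key := (h1.add h2).sub h3
  rwa [show ∀ S : ℝ, 2 * lam * S + 2 * lam * S - 4 * lam * S = 0 by intro; ring] at key

theorem hasSum_ite_fst_eq_one :
    HasSum (fun w : ℕ⁴ => if w.1 = 1 then uncurry4 del w else 0) (∑' c, mar2 del 1 (c + 1)) := by
  let g : ℕ × ℕ × ℕ → ℕ⁴ := fun p => (1, p.2.1, p.1, p.2.2)
  have hg : Injective g := fun p q hpq => by simp_all [g, Prod.ext_iff]
  have hs : Summable (uncurry4 del ∘ g) := h.summable.comp_injective hg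
  refine (hg.hasSum_iff fun w hw => ?_).mp ?_
  · obtain ⟨a, b, c, d⟩ := w
    rw [if_neg]
    rintro rfl
    exact hw ⟨(c, b, d), rfl⟩
  · have hfib : ∑' c, mar2 del 1 c = ∑' p, (uncurry4 del ∘ g) p :=
      (hs.tsum_prod' fun c => h.summable_slice 1 c).symm
    rw [h.tsum_mar2_one_succ, hfib]
    exact hs.hasSum.congr_fun fun p => by simp [g, uncurry4]

theorem flow_front_add_back_sub_exit (w : ℕ⁴) :
    flow del (frontRate del) w + flow del (backRate del) w - flow del (exitRate del) w =
      -if w.1 = 1 then uncurry4 del w else 0 := by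
  by_cases hw : uncurry4 del w = 0
  · simp [flow, hw]
  · rw [flow, flow, flow, ← mul_add, ← mul_sub,
      frontRate_add_backRate_sub_exitRate (h.le_of_ne_zero hw).1.1, mul_neg, mul_ite, mul_one,
      mul_zero]

theorem le_of_flow_frontRate_ne_zero {w : ℕ⁴} (hw : flow del (frontRate del) w ≠ 0) :
    (2, 1, 2, 1) ≤ w := by
  have hfront : w.1 ≠ 1 := fun h1 => right_ne_zero_of_mul hw (if_pos h1)
  have := h.le_of_ne_zero (left_ne_zero_of_mul hw)
  obtain ⟨a, b, c, d⟩ := w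
  simp only [Prod.mk_le_mk] at this hfront ⊢
  omega

theorem le_of_flow_backRate_ne_zero {w : ℕ⁴} (hw : flow del (backRate del) w ≠ 0) :
    (1, 1, 2, 1) ≤ w := by
  have := h.le_of_ne_zero (left_ne_zero_of_mul hw)
  obtain ⟨a, b, c, d⟩ := w
  simp only [Prod.mk_le_mk] at this ⊢
  have hc : c ≠ 1 := by
    rintro rfl
    obtain rfl : a = 1 := by omega
    exact right_ne_zero_of_mul hw (sub_self _)
  omega

theorem hasSum_serviceTerm : HasSum (serviceTerm del) (-∑' c, mar2 del 1 (c + 1)) := by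
  have hF := h.summable_flow 1 fun _ _ => h.abs_frontRate_le
  have hB := h.summable_flow 1 fun _ _ => h.abs_backRate_le
  have hE := h.summable_flow 1 fun x1 x2 _ => h.abs_exitRate_le x1 x2
  have hF' := (hasSum_comp_add_right_iff fun _ => h.le_of_flow_frontRate_ne_zero).mpr hF.hasSum
  have hB' := (hasSum_comp_add_right_iff fun _ => h.le_of_flow_backRate_ne_zero).mpr hB.hasSum
  have hE' := (hasSum_comp_add_right_iff (s := (1, 1, 1, 1))
    fun _ hw => (h.le_of_ne_zero (left_ne_zero_of_mul hw)).1).mpr hE.hasSum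
  have htotal := ((hF.hasSum.add hB.hasSum).sub hE.hasSum).unique
    (h.hasSum_ite_fst_eq_one.neg.congr_fun h.flow_front_add_back_sub_exit)
  rw [← htotal]
  exact (hF'.add hB').sub hE'

theorem hasSum_serviceTerm_swapPair :
    HasSum (fun v => serviceTerm del (swapPair v)) (-∑' c, mar2 del 1 (c + 1)) :=
  (Equiv.hasSum_iff (swapPair_involutive.toPerm _)).mpr h.hasSum_serviceTerm

end AdmissibleQuad

theorem fcfs_pair_drift_total_sum_general
    (lam : ℝ)
    (del : ℕ → ℕ → ℕ → ℕ → ℝ) (hdel : AdmissibleQuad del) :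
    Summable (fun v : ℕ × ℕ × ℕ × ℕ =>
      |GFCFS lam del (v.1 + 1) (v.2.1 + 1) (v.2.2.1 + 1) (v.2.2.2 + 1)|) ∧
    (∑' v : ℕ × ℕ × ℕ × ℕ,
        GFCFS lam del (v.1 + 1) (v.2.1 + 1) (v.2.2.1 + 1) (v.2.2.2 + 1)) =
      lam - 2 * ∑' x2 : ℕ, mar2 del 1 (x2 + 1) ∧
    ((∀ x1 y1 x2 y2 : ℕ, 1 ≤ x1 → 1 ≤ y1 → 1 ≤ x2 → 1 ≤ y2 →
        GFCFS lam del x1 y1 x2 y2 = 0) →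
      qPos del 0 = 1 - lam) := by
  have hG : HasSum (fun v : ℕ⁴ => GFCFS lam del (v.1 + 1) (v.2.1 + 1) (v.2.2.1 + 1) (v.2.2.2 + 1))
      (lam - 2 * ∑' x2 : ℕ, mar2 del 1 (x2 + 1)) := by
    have hparts := (((hdel.hasSum_diagTerm lam).add (hdel.hasSum_arrivalTerm lam)).add
      hdel.hasSum_serviceTerm).add hdel.hasSum_serviceTerm_swapPair
    rw [show ∀ S : ℝ, lam + 0 + -S + -S = lam - 2 * S by intro; ring] at hparts
    exact hparts.congr_fun (GFCFS_succ_eq hdel.2.2.1 lam)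
  refine ⟨hG.summable.abs, hG.tsum_eq, fun hzero => ?_⟩
  have hsum_zero : lam - 2 * ∑' x2 : ℕ, mar2 del 1 (x2 + 1) = 0 :=
    hG.unique (hasSum_zero.congr_fun fun v => hzero _ _ _ _ v.1.succ_pos v.2.1.succ_pos
      v.2.2.1.succ_pos v.2.2.2.succ_pos)
  rw [qPos_zero, tsum_mul_left]
  linarith

theorem fcfs_pair_drift_total_sum
    (lam : ℝ) (hlam0 : 0 < lam) (hlam1 : lam < 1)
    (del : ℕ → ℕ → ℕ → ℕ → ℝ) (hdel : AdmissibleQuad del) :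
    Summable (fun v : ℕ × ℕ × ℕ × ℕ =>
      |GFCFS lam del (v.1 + 1) (v.2.1 + 1) (v.2.2.1 + 1) (v.2.2.2 + 1)|) ∧
    (∑' v : ℕ × ℕ × ℕ × ℕ,
        GFCFS lam del (v.1 + 1) (v.2.1 + 1) (v.2.2.1 + 1) (v.2.2.2 + 1)) =
      lam - 2 * ∑' x2 : ℕ, mar2 del 1 (x2 + 1) ∧
    ((∀ x1 y1 x2 y2 : ℕ, 1 ≤ x1 → 1 ≤ y1 → 1 ≤ x2 → 1 ≤ y2 →
        GFCFS lam del x1 y1 x2 y2 = 0) →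
      qPos del 0 = 1 - lam) :=
  fcfs_pair_drift_total_sum_general lam del hdel
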